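/- For all constants Ĥ, c₁ ∈ ℝ, the Liu–Yau mass of the spheres of symmetry on the exterior CMC slice has the horizon limit lim_{r→2M⁺} m_LY(r) = 2M. -/

import Mathlib

open Real Filter Topology Set

/-- Schwarzschild lapse-type function `f(r) = 1 - 2M/r`. -/
noncomputable def f (M r : ℝ) : ℝ := 1 - 2 * M / r

/-- `P(r) = Ĥ·r + c₁/r²`. -/
noncomputable def P (H c1 r : ℝ) : ℝ := H * r + c1 / r ^ 2

/-- Slope of the height function of the exterior CMC slice:
`h'(r) = P(r)/(f(r)·√(f(r) + P(r)²))`. -/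
noncomputable def h' (M H c1 r : ℝ) : ℝ :=
  P H c1 r / (f M r * Real.sqrt (f M r + (P H c1 r) ^ 2))

/-- Hawking mass `m_H(r) = (r/2)(1 − (f⁻¹ − f h'²)⁻¹)`. -/
noncomputable def mH (M H c1 r : ℝ) : ℝ :=
  r / 2 * (1 - ((f M r)⁻¹ - f M r * (h' M H c1 r) ^ 2)⁻¹)

/-- Brown–York mass `m_BY(r) = r(1 − (f⁻¹ − f h'²)^(−1/2))`. -/
noncomputable def mBY (M H c1 r : ℝ) : ℝ :=
  r * (1 - ((f M r)⁻¹ - f M r * (h' M H c1 r) ^ 2) ^ (-(1 : ℝ) / 2))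

/-- Liu–Yau mass `m_LY(r) = r(1 − (1 − f² h'²)^(1/2)·(f⁻¹ − f h'²)^(−1/2))`. -/
noncomputable def mLY (M H c1 r : ℝ) : ℝ :=
  r * (1 - (1 - (f M r) ^ 2 * (h' M H c1 r) ^ 2) ^ ((1 : ℝ) / 2) *
    ((f M r)⁻¹ - f M r * (h' M H c1 r) ^ 2) ^ (-(1 : ℝ) / 2))

/-- Spacetime Hawking mass `m_H^st(r) = (r/2)(1 − (1 − f² h'²)(f⁻¹ − f h'²)⁻¹)`. -/
noncomputable def mHst (M H c1 r : ℝ) : ℝ :=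
  r / 2 * (1 - (1 - (f M r) ^ 2 * (h' M H c1 r) ^ 2) *
    ((f M r)⁻¹ - f M r * (h' M H c1 r) ^ 2)⁻¹)

section SlopeAlgebra

variable {a p : ℝ}

lemma sq_div_mul_sqrt (ha : 0 < a) :
    (p / (a * √(a + p ^ 2))) ^ 2 = p ^ 2 / (a ^ 2 * (a + p ^ 2)) := by
  rw [div_pow, mul_pow, Real.sq_sqrt (by positivity)]

lemma inv_sub_mul_sq_div_mul_sqrt (ha : 0 < a) :
    a⁻¹ - a * (p / (a * √(a + p ^ 2))) ^ 2 = (a + p ^ 2)⁻¹ := by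
  have : 0 < a + p ^ 2 := by positivity
  rw [sq_div_mul_sqrt ha]
  field_simp
  ring

lemma one_sub_sq_mul_sq_div_mul_sqrt (ha : 0 < a) :
    1 - a ^ 2 * (p / (a * √(a + p ^ 2))) ^ 2 = a / (a + p ^ 2) := by
  have : 0 < a + p ^ 2 := by positivity
  rw [sq_div_mul_sqrt ha]
  field_simp
  ring

end SlopeAlgebra

lemma rpow_half_div_mul_rpow_neg_half_inv {a s : ℝ} (ha : 0 ≤ a) (hs : 0 < s) :
    (a / s) ^ ((1 : ℝ) / 2) * s⁻¹ ^ (-(1 : ℝ) / 2) = √a := by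
  rw [Real.div_rpow ha hs.le, neg_div, Real.rpow_neg (inv_nonneg.2 hs.le),
    Real.inv_rpow hs.le, inv_inv, div_mul_cancel₀ _ (Real.rpow_pos_of_pos hs _).ne',
    Real.sqrt_eq_rpow]

lemma f_pos {M r : ℝ} (hM : 0 ≤ M) (hr : 2 * M < r) : 0 < f M r := by
  have hr0 : 0 < r := by linarith
  rw [f, sub_pos, div_lt_one hr0]
  exact hr

lemma f_two_mul_self {M : ℝ} (hM : M ≠ 0) : f M (2 * M) = 0 := by
  rw [f, div_self (by positivity), sub_self]

-- On the slice, `1 - f²h'² = f/(f + P²)` and `f⁻¹ - f h'² = (f + P²)⁻¹`: the factors of `P` cancel.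
lemma mLY_eq_mul_one_sub_sqrt_f {M H c1 r : ℝ} (hM : 0 ≤ M) (hr : 2 * M < r) :
    mLY M H c1 r = r * (1 - √(f M r)) := by
  have hf := f_pos hM hr
  rw [mLY, h', one_sub_sq_mul_sq_div_mul_sqrt hf, inv_sub_mul_sq_div_mul_sqrt hf,
    rpow_half_div_mul_rpow_neg_half_inv hf.le (by positivity)]

lemma continuousAt_mul_one_sub_sqrt_f {M r : ℝ} (hr : r ≠ 0) :
    ContinuousAt (fun r => r * (1 - √(f M r))) r := by
  unfold f
  fun_prop (disch := exact hr)

/-- For all constants `Ĥ, c₁ ∈ ℝ`, the Liu–Yau mass of the spheres of symmetry on the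
exterior CMC slice has the horizon limit `lim_{r→2M⁺} m_LY(r) = 2M`. -/
theorem liu_yau_horizon_limit (M H c1 : ℝ) (hM : 0 < M) :
    Tendsto (mLY M H c1) (𝓝[>] (2 * M)) (𝓝 (2 * M)) := by
  have heq : (fun r => r * (1 - √(f M r))) =ᶠ[𝓝[>] (2 * M)] mLY M H c1 := by
    filter_upwards [self_mem_nhdsWithin] with r hr
    exact (mLY_eq_mul_one_sub_sqrt_f hM.le hr).symm
  have hlim := (continuousAt_mul_one_sub_sqrt_f (M := M) (by positivity : 2 * M ≠ 0)).tendsto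
  rw [f_two_mul_self hM.ne', Real.sqrt_zero, sub_zero, mul_one] at hlim
  exact (hlim.mono_left nhdsWithin_le_nhds).congr' heq
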